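/- arXiv:1503.02105 — 4 statements merged into one kernel-verified Lean document; each statement's English description precedes it below -/
import Mathlib

section
/- Let G be a graph whose components are: at most one isolated vertex, and otherwise complete multipartite graphs each with at least three parts, where at most one part has exactly one vertex and all other parts have at least three vertices. Then G is paw-induced-saturated. -/
open SimpleGraph

/-- `G` contains an induced copy of `H`. -/
def HasInducedCopy {W V : Type*} (H : SimpleGraph W) (G : SimpleGraph V) : Prop :=
  Nonempty (H ↪g G)

/-- `G` is `H`-induced-saturated: `G` has no induced copy of `H`, but deleting any edge
or adding any non-edge creates an induced copy of `H`. -/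
def IsIndSat {V W : Type*} (G : SimpleGraph V) (H : SimpleGraph W) : Prop :=
  ¬ HasInducedCopy H G ∧
  (∀ u v : V, G.Adj u v → HasInducedCopy H (G.deleteEdges {s(u, v)})) ∧
  (∀ u v : V, u ≠ v → ¬ G.Adj u v →
    HasInducedCopy H (G ⊔ SimpleGraph.fromEdgeSet {s(u, v)}))

/-- The paw: a triangle `{0,1,2}` with pendant vertex `3` attached to `2`. -/
def paw : SimpleGraph (Fin 4) :=
  SimpleGraph.fromEdgeSet {s((0 : Fin 4), 1), s(0, 2), s(1, 2), s(2, 3)}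

/-!
Adjacency means "same component, different part", so inside a component non-adjacency is an
equivalence relation; an induced paw would put both triangle vertices in the part of the pendant
vertex. Deleting an edge `uv`: since at most one part of the component is a singleton, one
endpoint, say `u`, has a partner `x` in its part, and a third part supplies `w`; then `x, v, w, u`
span a diamond and removing its edge `uv` leaves a paw. Adding `uv` inside a part (of size at
least three, as it is not two) turns the claw from a vertex of another part to `u`, `v` and a third
vertex of the part into a paw. Adding `uv` across components: one endpoint is not isolated, hence
lies in a triangle of its component, and the new edge hangs the other endpoint on it.
-/

instance : DecidableRel paw.Adj := by
  unfold paw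
  infer_instance

theorem Set.exists_mem_ne_ne_of_three_le_ncard {α : Type*} {s : Set α} (hs : 3 ≤ s.ncard)
    (a b : α) : ∃ c ∈ s, c ≠ a ∧ c ≠ b := by
  have hlt : ({a, b} : Set α).ncard < s.ncard :=
    (Set.ncard_insert_le a {b}).trans_lt (by rw [Set.ncard_singleton]; omega)
  obtain ⟨c, hc, hcab⟩ := Set.exists_mem_notMem_of_ncard_lt_ncard hlt
  exact ⟨c, hc, fun h => hcab (.inl h), fun h => hcab (.inr h)⟩

section Paw

variable {V : Type*} {G : SimpleGraph V}

theorem hasInducedCopy_paw_iff :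
    HasInducedCopy paw G ↔ ∃ a b c d, G.Adj a b ∧ G.Adj a c ∧ G.Adj b c ∧ G.Adj c d ∧
      ¬G.Adj a d ∧ ¬G.Adj b d ∧ a ≠ d ∧ b ≠ d := by
  constructor
  · rintro ⟨f⟩
    refine ⟨f 0, f 1, f 2, f 3, ?_⟩
    simp only [f.map_adj_iff, f.injective.ne_iff]
    decide
  · rintro ⟨a, b, c, d, hab, hac, hbc, hcd, had, hbd, had', hbd'⟩
    have hadj (i j : Fin 4) : G.Adj (![a, b, c, d] i) (![a, b, c, d] j) ↔ paw.Adj i j := by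
      fin_cases i <;> fin_cases j <;>
        simp +decide [hab, hac, hbc, hcd, had, hbd, hab.symm, hac.symm, hbc.symm, G.adj_comm d]
    have hinj : Function.Injective ![a, b, c, d] := by
      intro i j h
      fin_cases i <;> fin_cases j <;>
        simp_all [hab.ne, hac.ne, hbc.ne, hcd.ne, hab.ne.symm, hac.ne.symm, hbc.ne.symm,
          hcd.ne.symm, had'.symm, hbd'.symm]
    exact ⟨⟨⟨_, hinj⟩, hadj _ _⟩⟩

theorem hasInducedCopy_paw_deleteEdges_of_diamond {a b c d : V} (hab : G.Adj a b)
    (hac : G.Adj a c) (hbc : G.Adj b c) (hcd : G.Adj c d) (hbd : G.Adj b d) (had : ¬G.Adj a d)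
    (had' : a ≠ d) :
    HasInducedCopy paw (G.deleteEdges {s(b, d)}) := by
  rw [hasInducedCopy_paw_iff]
  refine ⟨a, b, c, d, ?_⟩
  simp [hab, hac, hbc, hcd, had, had', hab.ne, hbd.ne, hcd.ne, hbc.ne.symm]

theorem hasInducedCopy_paw_sup_edge_of_claw {a b c d : V} (hac : G.Adj a c) (hbc : G.Adj b c)
    (hcd : G.Adj c d) (had : ¬G.Adj a d) (hbd : ¬G.Adj b d) (hab : a ≠ b) (had' : a ≠ d)
    (hbd' : b ≠ d) : HasInducedCopy paw (G ⊔ edge a b) := by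
  rw [hasInducedCopy_paw_iff]
  refine ⟨a, b, c, d, ?_⟩
  simp [edge_adj, hab, hac, hbc, hcd, had, hbd, had', hbd', had'.symm, hbd'.symm]

theorem hasInducedCopy_paw_sup_edge_of_triangle {a b c d : V} (hab : G.Adj a b) (hac : G.Adj a c)
    (hbc : G.Adj b c) (had : ¬G.Adj a d) (hbd : ¬G.Adj b d) (hcd : c ≠ d) (had' : a ≠ d)
    (hbd' : b ≠ d) : HasInducedCopy paw (G ⊔ edge c d) := by
  rw [hasInducedCopy_paw_iff]
  refine ⟨a, b, c, d, ?_⟩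
  simp [edge_adj, hab, hac, hbc, hcd, had, hbd, had', hbd', hac.ne, hbc.ne]

end Paw

section CompleteMultipartite

variable {V ι κ : Type*} {G : SimpleGraph V} {comp : V → ι} {part : V → κ}

theorem not_hasInducedCopy_paw
    (hadj : ∀ u v, G.Adj u v ↔ comp u = comp v ∧ part u ≠ part v) :
    ¬HasInducedCopy paw G := by
  rw [hasInducedCopy_paw_iff]
  rintro ⟨a, b, c, d, hab, hac, -, hcd, had, hbd, -, -⟩
  rw [hadj] at hab hac hcd had hbd
  have hcad : comp a = comp d := hac.1.trans hcd.1
  have hpad : part a = part d := not_ne_iff.mp fun h => had ⟨hcad, h⟩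
  have hpbd : part b = part d := not_ne_iff.mp fun h => hbd ⟨hab.1.symm.trans hcad, h⟩
  exact hab.2 (hpad.trans hpbd.symm)

theorem exists_ne_same_part_of_adj [Finite V]
    (hadj : ∀ u v, G.Adj u v ↔ comp u = comp v ∧ part u ≠ part v) {u v : V}
    (hone : {p | {x | comp x = comp u ∧ part x = p}.ncard = 1}.ncard ≤ 1) (huv : G.Adj u v) :
    (∃ x ≠ u, comp x = comp u ∧ part x = part u) ∨ ∃ x ≠ v, comp x = comp v ∧ part x = part v := by
  obtain ⟨hc, hp⟩ := (hadj u v).1 huv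
  by_contra! h
  have hsingleton : {part u, part v} ⊆ {p | {x | comp x = comp u ∧ part x = p}.ncard = 1} := by
    rintro _ (rfl | rfl) <;> rw [Set.mem_ofPred_eq, Set.ncard_eq_one]
    · exact ⟨u, Set.eq_singleton_iff_unique_mem.2
        ⟨⟨rfl, rfl⟩, fun x ⟨hxc, hxp⟩ => by_contra fun hxu => h.1 x hxu hxc hxp⟩⟩
    · exact ⟨v, Set.eq_singleton_iff_unique_mem.2
        ⟨⟨hc.symm, rfl⟩, fun x ⟨hxc, hxp⟩ => by_contra fun hxv => h.2 x hxv (hxc.trans hc) hxp⟩⟩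
  have hfin : {p | {x | comp x = comp u ∧ part x = p}.ncard = 1}.Finite := by
    refine (Set.finite_range part).subset fun p hp => ?_
    obtain ⟨x, -, hxp⟩ := Set.nonempty_of_ncard_ne_zero (by rw [hp]; exact one_ne_zero)
    exact ⟨x, hxp⟩
  have := Set.ncard_le_ncard hsingleton hfin
  rw [Set.ncard_pair hp] at this
  omega

theorem hasInducedCopy_paw_deleteEdges_of_same_part
    (hadj : ∀ u v, G.Adj u v ↔ comp u = comp v ∧ part u ≠ part v) {u v x : V}
    (hparts : 3 ≤ {p | ∃ y, comp y = comp u ∧ part y = p}.ncard) (huv : G.Adj u v)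
    (hxu : x ≠ u) (hxc : comp x = comp u) (hxp : part x = part u) :
    HasInducedCopy paw (G.deleteEdges {s(v, u)}) := by
  obtain ⟨hc, hp⟩ := (hadj u v).1 huv
  obtain ⟨_, ⟨w, hwc, rfl⟩, hwu, hwv⟩ :=
    Set.exists_mem_ne_ne_of_three_le_ncard hparts (part u) (part v)
  apply hasInducedCopy_paw_deleteEdges_of_diamond (a := x) (c := w) <;>
    simp_all [Ne.symm]

theorem hasInducedCopy_paw_sup_edge_of_part_eq [Finite V]
    (hadj : ∀ u v, G.Adj u v ↔ comp u = comp v ∧ part u ≠ part v) {u v : V}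
    (hparts : 3 ≤ {p | ∃ y, comp y = comp u ∧ part y = p}.ncard)
    (hsize : {x | comp x = comp u ∧ part x = part u}.ncard ≠ 2)
    (huv : u ≠ v) (hc : comp u = comp v) (hp : part u = part v) :
    HasInducedCopy paw (G ⊔ edge u v) := by
  have h3 : 3 ≤ {x | comp x = comp u ∧ part x = part u}.ncard := by
    have := Set.ncard_le_ncard (s := {u, v}) (t := {x | comp x = comp u ∧ part x = part u})
      (by rintro _ (rfl | rfl) <;> simp [hc, hp])
    rw [Set.ncard_pair huv] at this
    omega
  obtain ⟨w, ⟨hwc, hwp⟩, hwu, hwv⟩ := Set.exists_mem_ne_ne_of_three_le_ncard h3 u v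
  obtain ⟨_, ⟨a, hac, rfl⟩, hau, -⟩ :=
    Set.exists_mem_ne_ne_of_three_le_ncard hparts (part u) (part u)
  apply hasInducedCopy_paw_sup_edge_of_claw (c := a) (d := w) <;>
    simp_all [Ne.symm]

theorem hasInducedCopy_paw_sup_edge_of_comp_ne
    (hadj : ∀ u v, G.Adj u v ↔ comp u = comp v ∧ part u ≠ part v) {x y : V}
    (hparts : 3 ≤ {p | ∃ z, comp z = comp y ∧ part z = p}.ncard) (hc : comp y ≠ comp x) :
    HasInducedCopy paw (G ⊔ edge y x) := by
  obtain ⟨_, ⟨a, hac, rfl⟩, hay, -⟩ :=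
    Set.exists_mem_ne_ne_of_three_le_ncard hparts (part y) (part y)
  obtain ⟨_, ⟨b, hbc, rfl⟩, hby, hba⟩ :=
    Set.exists_mem_ne_ne_of_three_le_ncard hparts (part y) (part a)
  have hne (z : V) (hz : comp z = comp y) : z ≠ x := by
    rintro rfl
    exact hc hz.symm
  apply hasInducedCopy_paw_sup_edge_of_triangle (hcd := hne y rfl) (had' := hne a hac)
    (hbd' := hne b hbc) <;> simp_all [Ne.symm]

end CompleteMultipartite

/-- A graph whose components are at most one isolated vertex and otherwise
complete multipartite graphs with at least three parts, at most one part of size exactly one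
and all other parts of size at least three, is paw-induced-saturated.  The component and part
structure is encoded by maps `comp` and `part` with adjacency iff same component and
different part. -/
theorem paw_construction_isIndSat {V : Type*} [Fintype V] (G : SimpleGraph V)
    {ι κ : Type*} (comp : V → ι) (part : V → κ)
    (hadj : ∀ u v : V, G.Adj u v ↔ comp u = comp v ∧ part u ≠ part v)
    (hiso : {v : V | ∀ u, ¬ G.Adj v u}.Subsingleton)
    (hparts : ∀ i : ι, (∃ v w : V, v ≠ w ∧ comp v = i ∧ comp w = i) →
      3 ≤ {p : κ | ∃ v, comp v = i ∧ part v = p}.ncard)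
    (hone : ∀ i : ι, {p : κ | {v : V | comp v = i ∧ part v = p}.ncard = 1}.ncard ≤ 1)
    (hsize : ∀ (i : ι) (p : κ), {v : V | comp v = i ∧ part v = p}.ncard ≠ 2) :
    IsIndSat G paw := by
  have hparts' {u v : V} (huv : u ≠ v) (hc : comp u = comp v) :
      3 ≤ {p | ∃ y, comp y = comp u ∧ part y = p}.ncard :=
    hparts _ ⟨u, v, huv, rfl, hc.symm⟩
  refine ⟨not_hasInducedCopy_paw hadj, fun u v huv => ?_, fun u v huv hnadj => ?_⟩
  · obtain ⟨hc, -⟩ := (hadj u v).1 huv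
    rcases exists_ne_same_part_of_adj hadj (hone _) huv with ⟨x, hxu, hxc, hxp⟩ | ⟨x, hxv, hxc, hxp⟩
    · rw [Sym2.eq_swap]
      exact hasInducedCopy_paw_deleteEdges_of_same_part hadj (hparts' huv.ne hc) huv hxu hxc hxp
    · exact hasInducedCopy_paw_deleteEdges_of_same_part hadj (hparts' huv.ne.symm hc.symm)
        huv.symm hxv hxc hxp
  · change HasInducedCopy paw (G ⊔ edge u v)
    by_cases hc : comp u = comp v
    · have hp : part u = part v := not_ne_iff.mp fun hp => hnadj ((hadj u v).2 ⟨hc, hp⟩)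
      exact hasInducedCopy_paw_sup_edge_of_part_eq hadj (hparts' huv hc) (hsize _ _) huv hc hp
    · obtain ⟨w, huw⟩ | ⟨w, hvw⟩ : (∃ w, G.Adj u w) ∨ ∃ w, G.Adj v w := by
        by_contra! h
        exact huv (hiso h.1 h.2)
      · exact hasInducedCopy_paw_sup_edge_of_comp_ne hadj
          (hparts' huw.ne ((hadj u w).1 huw).1) hc
      · rw [edge_comm]
        exact hasInducedCopy_paw_sup_edge_of_comp_ne hadj
          (hparts' hvw.ne ((hadj v w).1 hvw).1) (Ne.symm hc)
end

section
/- If G is a paw-induced-saturated graph, then every edge of G lies in a triangle. -/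
open SimpleGraph

/-! Deleting an edge `uv` of a paw-induced-saturated graph `G` creates an induced paw. That paw
cannot avoid the pair `uv`, since it would then already be induced in `G`; so `u, v` are the
images of a non-adjacent pair of the paw. Every such pair has the common neighbour `2`, whose
image is a common neighbour of `u` and `v` in `G`. -/

lemma paw_exists_adj_adj_of_not_adj :
    ∀ i j : Fin 4, i ≠ j → ¬ paw.Adj i j → ∃ k, paw.Adj i k ∧ paw.Adj j k := by
  simp only [paw, fromEdgeSet_adj, Set.mem_insert_iff, Set.mem_singleton_iff, Sym2.eq_iff]
  decide

namespace SimpleGraph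
variable {V W : Type*} {G : SimpleGraph V} {H : SimpleGraph W}

lemma hasInducedCopy_of_embedding_deleteEdges {e : Sym2 V} (f : H ↪g G.deleteEdges {e})
    (hf : ∀ i j, i ≠ j → ¬ H.Adj i j → s(f i, f j) ≠ e) : HasInducedCopy H G := by
  refine ⟨⟨f.toEmbedding, fun {a b} =>
    ⟨fun hG => ?_, fun hH => G.deleteEdges_le _ (f.map_adj_iff.2 hH)⟩⟩⟩
  by_contra hH
  have hab : a ≠ b := fun hab => hG.ne (congrArg f hab)
  exact hH (f.map_adj_iff.1 (deleteEdges_adj.2 ⟨hG, hf a b hab hH⟩))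

lemma exists_adj_adj_of_hasInducedCopy_deleteEdges {u v : V}
    (hH : ∀ i j, i ≠ j → ¬ H.Adj i j → ∃ k, H.Adj i k ∧ H.Adj j k)
    (hfree : ¬ HasInducedCopy H G) (hdel : HasInducedCopy H (G.deleteEdges {s(u, v)})) :
    ∃ w, G.Adj u w ∧ G.Adj v w := by
  obtain ⟨f⟩ := hdel
  by_contra hnone
  refine hfree (hasInducedCopy_of_embedding_deleteEdges f fun i j hij hnadj hfij => hnone ?_)
  obtain ⟨k, hik, hjk⟩ := hH i j hij hnadj
  have hi := G.deleteEdges_le _ (f.map_adj_iff.2 hik)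
  have hj := G.deleteEdges_le _ (f.map_adj_iff.2 hjk)
  rcases Sym2.eq_iff.1 hfij with ⟨hiu, hjv⟩ | ⟨hiv, hju⟩
  · rw [hiu] at hi; rw [hjv] at hj; exact ⟨f k, hi, hj⟩
  · rw [hiv] at hi; rw [hju] at hj; exact ⟨f k, hj, hi⟩

end SimpleGraph

/-- In a paw-induced-saturated graph every edge lies in a triangle. -/
theorem paw_indSat_edge_in_triangle {V : Type*} (G : SimpleGraph V)
    (h : IsIndSat G paw) :
    ∀ u v : V, G.Adj u v → ∃ w : V, G.Adj u w ∧ G.Adj v w :=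
  fun u v huv =>
    exists_adj_adj_of_hasInducedCopy_deleteEdges paw_exists_adj_adj_of_not_adj h.1 (h.2.1 u v huv)
end

section
/- For k ≥ 2, the Cartesian product of k copies of K_3 contains no induced copy of the star K_{1,k+1}. -/
open SimpleGraph

/-- The star `K_{1,m}` with center `0` and `m` leaves. -/
def starGraph (m : ℕ) : SimpleGraph (Fin (m + 1)) :=
  SimpleGraph.fromRel (fun i _ => i = 0)

/-- The Cartesian product of `k` copies of `K₃`: vertices are functions `Fin k → Fin 3`,
adjacent iff they differ in exactly one coordinate. -/
def rook3 (k : ℕ) : SimpleGraph (Fin k → Fin 3) :=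
  SimpleGraph.fromRel (fun x y => (Finset.univ.filter fun i => x i ≠ y i).card = 1)

/-!
The neighbours of a vertex `x` of `K₃^k` fall into `k` classes according to the coordinate
in which they differ from `x`, and two distinct neighbours in the same class are adjacent.
The `k + 1` leaves of an induced star centred at `x` are pairwise non-adjacent, so by
pigeonhole two of them would lie in the same class.
-/

section Hamming

variable {ι : Type*} {β : ι → Type*} [Fintype ι] [∀ i, DecidableEq (β i)]

theorem hammingDist_eq_one_iff {x y : ∀ i, β i} :
    hammingDist x y = 1 ↔ ∃ i, x i ≠ y i ∧ ∀ j ≠ i, x j = y j := by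
  simp only [hammingDist, Finset.card_eq_one, Finset.eq_singleton_iff_unique_mem,
    Finset.mem_filter, Finset.mem_univ, true_and, not_imp_comm]

theorem hammingDist_eq_one_of_agree_off {x y z : ∀ i, β i} {i : ι}
    (hy : ∀ j ≠ i, x j = y j) (hz : ∀ j ≠ i, x j = z j) (hyz : y ≠ z) :
    hammingDist y z = 1 := by
  refine hammingDist_eq_one_iff.mpr ⟨i, fun hi => hyz (funext fun j => ?_),
    fun j hj => (hy j hj).symm.trans (hz j hj)⟩
  by_cases hj : j = i
  · exact hj ▸ hi
  · exact (hy j hj).symm.trans (hz j hj)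

end Hamming

theorem rook3_adj_iff {k : ℕ} {x y : Fin k → Fin 3} :
    (rook3 k).Adj x y ↔ hammingDist x y = 1 := by
  refine ⟨fun ⟨_, h⟩ => h.elim id fun h => hammingDist_comm x y ▸ h, fun h => ⟨?_, .inl h⟩⟩
  exact hammingDist_ne_zero.mp (by omega)

theorem starGraph_adj_zero_succ {m : ℕ} (j : Fin m) : (_root_.starGraph m).Adj 0 j.succ :=
  ⟨(Fin.succ_ne_zero j).symm, .inl rfl⟩

theorem starGraph_not_adj_succ_succ {m : ℕ} (i j : Fin m) :
    ¬ (_root_.starGraph m).Adj i.succ j.succ := fun ⟨_, h⟩ =>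
  h.elim (Fin.succ_ne_zero i) (Fin.succ_ne_zero j)

theorem rook3_no_induced_star_general (k : ℕ) :
    ¬ HasInducedCopy (_root_.starGraph (k + 1)) (rook3 k) := by
  rintro ⟨f⟩
  have hleaf (j : Fin (k + 1)) : ∃ i, f 0 i ≠ f j.succ i ∧ ∀ l ≠ i, f 0 l = f j.succ l :=
    hammingDist_eq_one_iff.mp (rook3_adj_iff.mp (f.map_adj_iff.mpr (starGraph_adj_zero_succ j)))
  choose coord hcoord using hleaf
  obtain ⟨j₁, j₂, hne, hsame⟩ := Fintype.exists_ne_map_eq_of_card_lt coord (by simp)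
  apply starGraph_not_adj_succ_succ j₁ j₂
  rw [← f.map_adj_iff, rook3_adj_iff]
  exact hammingDist_eq_one_of_agree_off (hcoord j₁).2 (hsame ▸ (hcoord j₂).2)
    (f.injective.ne ((Fin.succ_injective _).ne hne))

/-- For `k ≥ 2`, the Cartesian product of `k` copies of `K₃` contains no
induced copy of the star `K_{1,k+1}`. -/
theorem rook3_no_induced_star (k : ℕ) (hk : 2 ≤ k) :
    ¬ HasInducedCopy (_root_.starGraph (k + 1)) (rook3 k) :=
  rook3_no_induced_star_general k
end

section
/- Let k ≥ 2 and let G be a K_{1,k+1}-induced-saturated graph on n vertices. Then the set S of vertices of degree at most k-1 has size at most k, and consequently G has at least nk/2 - k²/2 edges. -/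
/-!
If `u, v` are non-adjacent, an induced star in `G + uv` that is not already induced in `G` must
use the new edge `uv`, so its centre is `u` or `v`; that centre has `k + 1` neighbours in
`G + uv`, hence at least `k` in `G`. Thus any two vertices of degree `< k` are adjacent: they
form a clique, and a clique of vertices of degree `< k` has at most `k` vertices. The remaining
vertices have degree `≥ k`, and the handshake lemma gives the edge bound.
-/

open SimpleGraph

open Finset

lemma starGraph_eq_starGraph_zero (m : ℕ) :
    _root_.starGraph m = SimpleGraph.starGraph (0 : Fin (m + 1)) :=
  rfl

namespace SimpleGraph

variable {V : Type*} [Fintype V] (G : SimpleGraph V) [DecidableRel G.Adj]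

lemma degree_sup_edge_le [DecidableEq V] (u v w : V) :
    (G ⊔ edge u v).degree w ≤ G.degree w + 1 := by
  rw [← card_neighborFinset_eq_degree, ← card_neighborFinset_eq_degree]
  calc #((G ⊔ edge u v).neighborFinset w)
      ≤ #(insert (if w = u then v else u) (G.neighborFinset w)) := by
        refine card_le_card fun x hx ↦ ?_
        simp only [mem_neighborFinset, sup_adj, edge_adj] at hx
        grind [mem_neighborFinset]
    _ ≤ #(G.neighborFinset w) + 1 := card_insert_le _ _

variable {G}

lemma IsClique.card_le_of_forall_degree_lt {s : Finset V} {k : ℕ} (hs : G.IsClique (s : Set V))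
    (hdeg : ∀ v ∈ s, G.degree v < k) : #s ≤ k := by
  classical
  obtain rfl | ⟨u, hu⟩ := s.eq_empty_or_nonempty
  · simp
  have hsub : s.erase u ⊆ G.neighborFinset u := fun v hv ↦
    (mem_neighborFinset _ _ _).2 <|
      hs (mem_coe.2 hu) (mem_coe.2 (mem_of_mem_erase hv)) (ne_of_mem_erase hv).symm
  have := card_le_card hsub
  rw [card_erase_of_mem hu, card_neighborFinset_eq_degree] at this
  have := hdeg u hu
  omega

lemma card_filter_le_degree_mul_le (k : ℕ) :
    #{v | k ≤ G.degree v} * k ≤ 2 * #G.edgeFinset := by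
  rw [← sum_degrees_eq_twice_card_edges, ← smul_eq_mul, ← sum_const]
  calc ∑ _v ∈ {v | k ≤ G.degree v}, k
      ≤ ∑ v ∈ {v | k ≤ G.degree v}, G.degree v :=
        sum_le_sum fun v hv ↦ (mem_filter.1 hv).2
    _ ≤ ∑ v, G.degree v := sum_le_sum_of_subset (subset_univ _)

end SimpleGraph

section Saturation

variable {V W : Type*} {H : SimpleGraph W} {G : SimpleGraph V}

lemma exists_adj_of_embedding_sup_edge (hG : ¬HasInducedCopy H G) {u v : V}
    (f : H ↪g G ⊔ edge u v) : ∃ x y, H.Adj x y ∧ f x = u ∧ f y = v := by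
  by_contra hno
  refine hG ⟨⟨f.toEmbedding, fun {a b} ↦
    ⟨fun hab ↦ f.map_adj_iff.1 (Or.inl hab), fun hab ↦ ?_⟩⟩⟩
  rcases f.map_adj_iff.2 hab with hG | huv
  · exact hG
  · rw [edge_adj] at huv
    rcases huv.1 with ⟨ha, hb⟩ | ⟨ha, hb⟩
    · exact absurd ⟨a, b, hab, ha, hb⟩ hno
    · exact absurd ⟨b, a, hab.symm, hb, ha⟩ hno

variable [Fintype V] [DecidableRel G.Adj] {k : ℕ}

lemma le_degree_or_le_degree_of_hasInducedCopy_sup_edge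
    (hG : ¬HasInducedCopy (_root_.starGraph (k + 1)) G) {u v : V}
    (h : HasInducedCopy (_root_.starGraph (k + 1)) (G ⊔ edge u v)) :
    k ≤ G.degree u ∨ k ≤ G.degree v := by
  classical
  rw [starGraph_eq_starGraph_zero] at hG h
  obtain ⟨f⟩ := h
  obtain ⟨x, y, hxy, hx, hy⟩ := exists_adj_of_embedding_sup_edge hG f
  have center_le : k + 1 ≤ (G ⊔ edge u v).degree (f 0) := by
    simpa [degree_starGraph_center] using f.toCopy.degree_le 0
  have center_sup := G.degree_sup_edge_le u v (f 0)
  rcases (starGraph_adj.1 hxy).2 with rfl | rfl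
  · rw [hx] at center_le center_sup
    omega
  · rw [hy] at center_le center_sup
    omega

lemma IsIndSat.isClique_degree_lt (h : IsIndSat G (_root_.starGraph (k + 1))) :
    G.IsClique {v | G.degree v < k} := by
  intro u hu v hv huv
  by_contra hnadj
  have := le_degree_or_le_degree_of_hasInducedCopy_sup_edge h.1 (h.2.2 u v huv hnadj)
  have hu : G.degree u < k := hu
  have hv : G.degree v < k := hv
  omega

lemma IsIndSat.card_filter_degree_lt_le (h : IsIndSat G (_root_.starGraph (k + 1))) :
    #{v | G.degree v < k} ≤ k :=
  IsClique.card_le_of_forall_degree_lt (by simpa using h.isClique_degree_lt)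
    fun _ hv ↦ (mem_filter.1 hv).2

end Saturation

theorem star_indSat_min_edges_general {V : Type*} [Fintype V]
    (k n : ℕ) (hk : 2 ≤ k) (G : SimpleGraph V) [DecidableRel G.Adj]
    (hn : Fintype.card V = n) (h : IsIndSat G (_root_.starGraph (k + 1))) :
    (Finset.univ.filter fun v : V => G.degree v ≤ k - 1).card ≤ k ∧
    (n * k : ℝ) / 2 - (k ^ 2 : ℝ) / 2 ≤ (G.edgeFinset.card : ℝ) := by
  simp_rw [Nat.le_sub_one_iff_lt (by omega : 0 < k)]
  have hlow := h.card_filter_degree_lt_le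
  have hhigh := G.card_filter_le_degree_mul_le k
  have hsplit : #{v | G.degree v < k} + #{v | k ≤ G.degree v} = n := by
    simpa [not_lt, hn] using card_filter_add_card_filter_not (s := univ) (G.degree · < k)
  refine ⟨hlow, ?_⟩
  rw [← hsplit]
  have hlow' : (#{v | G.degree v < k} : ℝ) ≤ k := by exact_mod_cast hlow
  have hhigh' : (#{v | k ≤ G.degree v} * k : ℝ) ≤ 2 * #G.edgeFinset := by exact_mod_cast hhigh
  push_cast
  nlinarith [Nat.cast_nonneg (α := ℝ) k]

/-- If `k ≥ 2` and `G` is a `K_{1,k+1}`-induced-saturated graph on `n`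
vertices, then the set of vertices of degree at most `k - 1` has size at most `k`, and
consequently `G` has at least `nk/2 - k²/2` edges. -/
theorem star_indSat_min_edges {V : Type*} [Fintype V] [DecidableEq V]
    (k n : ℕ) (hk : 2 ≤ k) (G : SimpleGraph V) [DecidableRel G.Adj]
    (hn : Fintype.card V = n) (h : IsIndSat G (_root_.starGraph (k + 1))) :
    (Finset.univ.filter fun v : V => G.degree v ≤ k - 1).card ≤ k ∧
    (n * k : ℝ) / 2 - (k ^ 2 : ℝ) / 2 ≤ (G.edgeFinset.card : ℝ) :=
  star_indSat_min_edges_general k n hk G hn h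
end
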